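/- Let k be a number field and n ≥ 2 an integer. Let D ⊆ ℙⁿ be the codimension-two linear subspace {x₀ = x₁ = 0}, and for Q ∈ ℙⁿ(k) with (q₀,q₁) ≠ (0,0) define λ_{D,v}(Q) = log(‖Q‖_v / max(|q₀|_v, |q₁|_v)). Then there exist non-negative real numbers n_v, one for each place v of k, with n_v = 0 for all but finitely many places v, such that the set {Q ∈ ℙⁿ(k) : (q₀,q₁) ≠ (0,0) and λ_{D,v}(Q) ≤ n_v for every place v of k} is Zariski dense in ℙⁿ. (This is the instance X = ℙⁿ, D a codimension-two linear subspace, of the theorem that a variety whose generic linear section is a rational curve has a potentially dense set of everywhere D-integral points for D of codimension at least two.) -/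

import Mathlib

/-!
Take `n_v = 0` everywhere. A point `(1 : t : y₁ : … : y_{n-1})` with natural numbers `yᵢ ≤ t` has
`λ_{D,v} ≤ 0` at every place: at a finite place every coordinate has absolute value `≤ 1 = |q₀|_v`,
at an infinite place every coordinate is `≤ t = |q₁|_v`. These points are Zariski dense: the
dehomogenization of a nonzero form `f` at `x₀` is nonzero, and a nonzero polynomial in
`(t, y)` is nonzero at some such point, since one may first choose `y` where its leading
coefficient in `t` is nonzero, then `t ≥ max yᵢ` avoiding the finitely many roots in `t`.
-/

open NumberField IsDedekindDomain

/-- The finite places of a number field `K`: the nonzero prime ideals of its ring of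
integers. -/
abbrev FinPlace (K : Type) [Field K] [NumberField K] := HeightOneSpectrum (𝓞 K)

/-- The places of a number field `K`: either a finite place or an infinite place (the
latter arising from an embedding of `K` into `ℂ`). -/
abbrev Place (K : Type) [Field K] [NumberField K] :=
  FinPlace K ⊕ NumberField.InfinitePlace K

/-- The normalized `v`-adic absolute value attached to a finite place `v` of `K`:
`|x|_v = (N 𝔭)^(-ord_v x)` where `N 𝔭` is the absolute norm of the prime ideal. -/
noncomputable def finAbs {K : Type} [Field K] [NumberField K] (v : FinPlace K) (x : K) : ℝ :=
  (WithZeroMulInt.toNNReal (e := (Ideal.absNorm v.asIdeal : NNReal))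
    (by
      refine Nat.cast_ne_zero (R := NNReal) |>.mpr ?_
      simpa [Ideal.absNorm_eq_zero_iff] using v.ne_bot)
    (v.valuation K x) : ℝ)

/-- The absolute value `|·|_v` attached to a place `v` of `K`: the normalized `𝔭`-adic
absolute value at a finite place, and the absolute value induced by the corresponding
embedding at an infinite place. -/
noncomputable def placeAbs {K : Type} [Field K] [NumberField K] : Place K → K → ℝ
  | .inl v => finAbs v
  | .inr w => fun x => w x

/-- `‖q‖_v = max (|q₀|_v, …, |q_n|_v)`: the `v`-adic sup norm of a coordinate vector. -/
noncomputable def projNorm {K : Type} [Field K] [NumberField K] {n : ℕ} (v : Place K)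
    (q : Fin (n + 1) → K) : ℝ :=
  ⨆ i, placeAbs v (q i)

/-- The Weil function `λ_{D,v}(Q) = log (‖Q‖_v / max (|q₀|_v, |q₁|_v))` of the
codimension-two linear subspace `D = {x₀ = x₁ = 0}` at the place `v`, computed using the
canonical representative (mathematically it is independent of the choice of homogeneous
coordinates). -/
noncomputable def weilD {K : Type} [Field K] [NumberField K] {n : ℕ} (v : Place K)
    (Q : Projectivization K (Fin (n + 1) → K)) : ℝ :=
  Real.log (projNorm v Q.rep / max (placeAbs v (Q.rep 0)) (placeAbs v (Q.rep 1)))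

namespace MvPolynomial

theorem IsHomogeneous.eval_smul {R σ : Type*} [CommSemiring R] {f : MvPolynomial σ R} {e : ℕ}
    (hf : f.IsHomogeneous e) (t : R) (x : σ → R) :
    eval (t • x) f = t ^ e * eval x f := by
  rw [eval_eq, eval_eq, Finset.mul_sum]
  refine Finset.sum_congr rfl fun d hd => ?_
  have hdeg : ∑ i ∈ d.support, d i = e := by
    rw [← Finsupp.degree_apply, Finsupp.degree_eq_weight_one]
    exact hf (mem_support_iff.mp hd)
  simp_rw [Pi.smul_apply, smul_eq_mul, mul_pow, Finset.prod_mul_distrib,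
    Finset.prod_pow_eq_pow_sum, hdeg]
  ring

theorem exists_natCast_eval_ne_zero {R σ : Type*} [CommRing R] [IsDomain R] [CharZero R]
    {p : MvPolynomial σ R} (hp : p ≠ 0) : ∃ z : σ → ℕ, eval (fun i => (z i : R)) p ≠ 0 := by
  by_contra! h
  refine hp (funext_set (fun _ => Set.range Nat.cast)
    (fun _ => Set.infinite_range_of_injective Nat.cast_injective) fun x hx => ?_)
  choose z hz using fun i => hx i trivial
  obtain rfl : (fun i => (z i : R)) = x := _root_.funext hz
  exact h z

theorem exists_natCast_eval_ne_zero_max_at_zero {R : Type*} [CommRing R] [IsDomain R] [CharZero R]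
    {m : ℕ} {p : MvPolynomial (Fin (m + 1)) R} (hp : p ≠ 0) :
    ∃ y : Fin (m + 1) → ℕ, (∀ i, y i ≤ y 0) ∧ eval (fun i => (y i : R)) p ≠ 0 := by
  set P := finSuccEquiv R m p
  have hP : P.leadingCoeff ≠ 0 := by simpa [P] using hp
  obtain ⟨z, hz⟩ := exists_natCast_eval_ne_zero hP
  set φ := P.map (eval fun i => (z i : R))
  have hφ : φ ≠ 0 := by
    rw [← Polynomial.leadingCoeff_ne_zero, Polynomial.leadingCoeff_map_of_leadingCoeff_ne_zero _ hz]
    exact hz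
  have hroots : {t : ℕ | φ.IsRoot t}.Finite :=
    (φ.finite_setOfPred_isRoot hφ).preimage Nat.cast_injective.injOn
  obtain ⟨t, ht, hzt⟩ := hroots.infinite_compl.exists_gt (Finset.univ.sup z)
  have hle : ∀ i, (Fin.cons t z : Fin (m + 1) → ℕ) i ≤ t :=
    Fin.cases le_rfl fun i => by simpa using (Finset.le_sup (Finset.mem_univ i)).trans hzt.le
  refine ⟨Fin.cons t z, hle, ?_⟩
  rw [show (fun i => ((Fin.cons t z : Fin (m + 1) → ℕ) i : R)) = Fin.cons (t : R) (z ·) from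
    Fin.comp_cons Nat.cast t z, eval_eq_eval_mv_eval']
  exact ht

noncomputable def dehomogenize {R : Type*} [CommSemiring R] {m : ℕ}
    (f : MvPolynomial (Fin (m + 1)) R) : MvPolynomial (Fin m) R :=
  Polynomial.eval 1 (finSuccEquiv R m f)

theorem eval_dehomogenize {R : Type*} [CommSemiring R] {m : ℕ}
    (f : MvPolynomial (Fin (m + 1)) R) (y : Fin m → R) :
    eval y (dehomogenize f) = eval (Fin.cons 1 y) f := by
  rw [dehomogenize, eval_polynomial_eval_finSuccEquiv, map_one]
  rfl

theorem IsHomogeneous.dehomogenize_ne_zero {K : Type*} [Field K] [Infinite K] {m e : ℕ}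
    {f : MvPolynomial (Fin (m + 1)) K} (hf : f.IsHomogeneous e) (h0 : f ≠ 0) :
    dehomogenize f ≠ 0 := by
  intro hg
  -- by homogeneity `f` vanishes on the box `{x₀ ≠ 0} × K^m`, whose sides are infinite
  refine h0 (funext_set (Fin.cons {0}ᶜ fun _ => Set.univ)
    (Fin.cases (Set.finite_singleton 0).infinite_compl fun _ => Set.infinite_univ) fun x hx => ?_)
  have hx0 : x 0 ≠ 0 := hx 0 trivial
  have hx_smul : x = x 0 • Fin.cons 1 fun i => (x 0)⁻¹ * x i.succ := by
    ext j
    refine Fin.cases ?_ (fun i => ?_) j <;> simp [hx0]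
  rw [map_zero, hx_smul, hf.eval_smul, ← eval_dehomogenize, hg, map_zero, mul_zero]

theorem IsHomogeneous.eval_rep_mk_eq_zero_iff {K : Type*} [Field K] {σ : Type*} {e : ℕ}
    {f : MvPolynomial σ K} (hf : f.IsHomogeneous e) {q : σ → K} (hq : q ≠ 0) :
    eval (Projectivization.mk K q hq).rep f = 0 ↔ eval q f = 0 := by
  obtain ⟨a, ha⟩ := Projectivization.exists_smul_eq_mk_rep K q hq
  rw [← ha, Units.smul_def, hf.eval_smul, mul_eq_zero, or_iff_right (pow_ne_zero _ a.ne_zero)]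

end MvPolynomial

theorem Projectivization.rep_mk_apply_eq_zero_iff {K σ : Type*} [Field K] {q : σ → K}
    (hq : q ≠ 0) (j : σ) : (mk K q hq).rep j = 0 ↔ q j = 0 := by
  obtain ⟨a, ha⟩ := exists_smul_eq_mk_rep K q hq
  rw [← ha, Pi.smul_apply, Units.smul_def, smul_eq_mul, mul_eq_zero, or_iff_right a.ne_zero]

section Places

variable {K : Type} [Field K] [NumberField K]

noncomputable def placeAbv : Place K → AbsoluteValue K ℝ
  | .inl v => HeightOneSpectrum.adicAbv K v
  | .inr w => w.1

theorem placeAbv_apply (v : Place K) (x : K) : placeAbv v x = placeAbs v x := by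
  cases v <;> rfl

theorem placeAbs_natCast_le_max_one (v : Place K) {a b : ℕ} (h : a ≤ max 1 b) :
    placeAbs v (a : K) ≤ max 1 (placeAbs v (b : K)) := by
  cases v with
  | inl v => exact (HeightOneSpectrum.adicAbv_natCast_le_one K v a).trans (le_max_left _ _)
  | inr w =>
    simp only [placeAbs, InfinitePlace.map_natCast]
    exact_mod_cast h

theorem projNorm_smul {n : ℕ} (v : Place K) (a : K) (q : Fin (n + 1) → K) :
    projNorm v (a • q) = placeAbs v a * projNorm v q := by
  simp only [projNorm, Pi.smul_apply, smul_eq_mul, ← placeAbv_apply, map_mul]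
  exact (Real.mul_iSup_of_nonneg (apply_nonneg _ _) _).symm

theorem weilD_mk {n : ℕ} (v : Place K) {q : Fin (n + 1) → K} (hq : q ≠ 0) :
    weilD v (.mk K q hq) =
      Real.log (projNorm v q / max (placeAbs v (q 0)) (placeAbs v (q 1))) := by
  obtain ⟨a, ha⟩ := Projectivization.exists_smul_eq_mk_rep K q hq
  have ha0 : 0 < placeAbv v a := AbsoluteValue.pos _ a.ne_zero
  rw [weilD, ← ha, Units.smul_def, projNorm_smul]
  simp only [Pi.smul_apply, smul_eq_mul, ← placeAbv_apply, map_mul]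
  rw [← mul_max_of_nonneg _ _ ha0.le, mul_div_mul_left _ _ ha0.ne']

theorem weilD_mk_natCast_nonpos {n : ℕ} (v : Place K) {q : Fin (n + 1) → ℕ} (h0 : q 0 = 1)
    (hq : ∀ j, q j ≤ max (q 0) (q 1)) (hq0 : (fun j => (q j : K)) ≠ 0) :
    weilD v (.mk K _ hq0) ≤ 0 := by
  have hle : ∀ j, placeAbs v (q j : K) ≤ max (placeAbs v (q 0 : K)) (placeAbs v (q 1 : K)) := by
    intro j
    have := placeAbs_natCast_le_max_one (K := K) v (h0 ▸ hq j)
    rwa [h0, Nat.cast_one, ← placeAbv_apply v 1, map_one]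
  have hM : 0 ≤ max (placeAbs v (q 0 : K)) (placeAbs v (q 1 : K)) :=
    (placeAbv_apply v _ ▸ apply_nonneg _ _).trans (le_max_left _ _)
  rw [weilD_mk]
  have hN : 0 ≤ projNorm v fun j => (q j : K) :=
    Real.iSup_nonneg fun j => placeAbv_apply v _ ▸ apply_nonneg _ _
  exact Real.log_nonpos (div_nonneg hN hM) (div_le_one_of_le₀ (ciSup_le hle) hM)

end Places

/-- Let `k` be a number field, `n ≥ 2`, `D = {x₀ = x₁ = 0} ⊆ ℙⁿ` and
`λ_{D,v}(Q) = log (‖Q‖_v / max (|q₀|_v, |q₁|_v))`. Then there exist non-negative reals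
`n_v`, one for each place `v` of `k`, with `n_v = 0` for all but finitely many places,
such that the set `{Q ∈ ℙⁿ(k) : (q₀, q₁) ≠ (0, 0) and λ_{D,v}(Q) ≤ n_v for every place v}`
is Zariski dense in `ℙⁿ`; i.e., for every nonzero homogeneous polynomial `f` there is a
point `Q` of the set with `f(Q) ≠ 0`. -/
theorem dense_everywhere_integral_points_codim_two
    (K : Type) [Field K] [NumberField K] (n : ℕ) (hn : 2 ≤ n) :
    ∃ c : Place K → ℝ, (∀ v, 0 ≤ c v) ∧ {v : Place K | c v ≠ 0}.Finite ∧
      ∀ (f : MvPolynomial (Fin (n + 1)) K), f ≠ 0 → ∀ e : ℕ, f.IsHomogeneous e →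
        ∃ Q : Projectivization K (Fin (n + 1) → K),
          (¬(Q.rep 0 = 0 ∧ Q.rep 1 = 0) ∧ ∀ v : Place K, weilD v Q ≤ c v) ∧
          MvPolynomial.eval Q.rep f ≠ 0 := by
  obtain ⟨m, rfl⟩ : ∃ m, n = m + 1 := ⟨n - 1, by omega⟩
  refine ⟨0, fun _ => le_rfl, by simp, fun f hf e he => ?_⟩
  obtain ⟨y, hy, hfy⟩ :=
    MvPolynomial.exists_natCast_eval_ne_zero_max_at_zero (he.dehomogenize_ne_zero hf)
  set q : Fin (m + 1 + 1) → ℕ := Fin.cons 1 y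
  have hq_le : ∀ j, q j ≤ max (q 0) (q 1) :=
    Fin.cases (le_max_left _ _) fun i => (hy i).trans (le_max_right _ _)
  have hq_cast : (fun j => (q j : K)) = Fin.cons 1 fun i => (y i : K) := by
    funext j
    cases j using Fin.cases <;> simp [q]
  have hfq : MvPolynomial.eval (fun j => (q j : K)) f ≠ 0 := by
    rwa [hq_cast, ← MvPolynomial.eval_dehomogenize]
  have hq0 : (fun j => (q j : K)) ≠ 0 := fun h => by simpa [q] using congrFun h 0
  refine ⟨.mk K _ hq0, ⟨?_, fun v => weilD_mk_natCast_nonpos v rfl hq_le hq0⟩,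
    (he.eval_rep_mk_eq_zero_iff hq0).not.mpr hfq⟩
  simp [Projectivization.rep_mk_apply_eq_zero_iff, q]
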